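/- Let r ≥ 1, let x_1, x_2, x_3 ∈ ℂ^r with ‖x_i‖ = 1 for i = 1, 2, 3, and assume the six vectors x_1, x_2, x_3, x̄_1, x̄_2, x̄_3 span ℂ^r. Let T_1, T_2, T_3 be the Varopoulos triple on H = ℂ ⊕ ℂ^r ⊕ ℂ and let Λ be the associated 6 × 3r matrix. Then (T_1, T_2, T_3) is extremal if and only if r = 2 and Λ has trivial kernel (Λ z = 0 implies z = 0). -/

import Mathlib

open ContinuousLinearMap in
/-- The block operator `X (h, m) = (T h + A m, B m)` on the Hilbert direct sum `H ⊕₂ M`. -/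
noncomputable def blockOp {H M : Type*} [NormedAddCommGroup H] [InnerProductSpace ℂ H]
    [NormedAddCommGroup M] [InnerProductSpace ℂ M]
    (T : H →L[ℂ] H) (A : M →L[ℂ] H) (B : M →L[ℂ] M) :
    WithLp 2 (H × M) →L[ℂ] WithLp 2 (H × M) :=
  ((WithLp.prodContinuousLinearEquiv 2 ℂ H M).symm : H × M →L[ℂ] WithLp 2 (H × M)) ∘L
    ((T ∘L fst ℂ H M + A ∘L snd ℂ H M).prod (B ∘L snd ℂ H M)) ∘L
    ((WithLp.prodContinuousLinearEquiv 2 ℂ H M) : WithLp 2 (H × M) →L[ℂ] H × M)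

/-- A tuple of commuting contractions is extremal if every block extension
`X_i (h, m) = (T_i h + A_i m, B_i m)` by commuting contractions has `A_i = 0` for all `i`. -/
def IsExtremal {n : ℕ} {H : Type*} [NormedAddCommGroup H] [InnerProductSpace ℂ H]
    [CompleteSpace H] (T : Fin n → H →L[ℂ] H) : Prop :=
  ∀ (M : Type*) [NormedAddCommGroup M] [InnerProductSpace ℂ M] [CompleteSpace M],
    ∀ (A : Fin n → M →L[ℂ] H) (B : Fin n → M →L[ℂ] M),
      (∀ i, ‖blockOp (T i) (A i) (B i)‖ ≤ 1) →
      (∀ i j, blockOp (T i) (A i) (B i) ∘L blockOp (T j) (A j) (B j)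
            = blockOp (T j) (A j) (B j) ∘L blockOp (T i) (A i) (B i)) →
      ∀ i, A i = 0

noncomputable section

/-- The Hilbert space `ℂ ⊕₂ L ⊕₂ ℂ` on which the Varopoulos triple acts. -/
abbrev VarSpace (L : Type*) [NormedAddCommGroup L] [InnerProductSpace ℂ L] : Type _ :=
  WithLp 2 (ℂ × WithLp 2 (L × ℂ))

variable {L : Type*} [NormedAddCommGroup L] [InnerProductSpace ℂ L]

/-- The identification of `VarSpace L` with `ℂ × L × ℂ` as a continuous linear equivalence. -/
def varEquiv (L : Type*) [NormedAddCommGroup L] [InnerProductSpace ℂ L] :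
    VarSpace L ≃L[ℂ] ℂ × L × ℂ :=
  (WithLp.prodContinuousLinearEquiv 2 ℂ ℂ (WithLp 2 (L × ℂ))).trans
    ((ContinuousLinearEquiv.refl ℂ ℂ).prodCongr (WithLp.prodContinuousLinearEquiv 2 ℂ L ℂ))

/-- The element `(c, v, d)` of `VarSpace L`. -/
def varMk (c : ℂ) (v : L) (d : ℂ) : VarSpace L := (varEquiv L).symm (c, v, d)

open ContinuousLinearMap in
/-- The Varopoulos operator `T (c, v, d) = (0, c • x, ⟪xbar, v⟫)` on `ℂ ⊕₂ L ⊕₂ ℂ`.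
With `xbar` the entrywise conjugate of `x`, the third coordinate is the bilinear
pairing `Σ_α x(α) v(α)`. -/
def varOp (x xbar : L) : VarSpace L →L[ℂ] VarSpace L :=
  ((varEquiv L).symm : ℂ × L × ℂ →L[ℂ] VarSpace L) ∘L
    ((0 : ℂ × L × ℂ →L[ℂ] ℂ).prod
      (((fst ℂ ℂ (L × ℂ)).smulRight x).prod
        ((innerSL ℂ xbar) ∘L (fst ℂ L ℂ) ∘L (snd ℂ ℂ (L × ℂ))))) ∘L
    ((varEquiv L) : VarSpace L →L[ℂ] ℂ × L × ℂ)

end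

/-- The entrywise complex conjugate of a vector in `ℂ^r`. -/
noncomputable def euclConj {r : ℕ} (x : EuclideanSpace ℂ (Fin r)) :
    EuclideanSpace ℂ (Fin r) :=
  (WithLp.equiv 2 (Fin r → ℂ)).symm fun ℓ => starRingEnd ℂ (x ℓ)

/-- The `6 × 3r` matrix `Λ` associated with `x_1, x_2, x_3 ∈ ℂ^r` (`0`-indexed:
columns are grouped in three blocks of length `r`, block `b` and position `ℓ`
corresponding to column `b * r + ℓ`). -/
noncomputable def lambdaMatrix {r : ℕ} (x : Fin 3 → EuclideanSpace ℂ (Fin r)) :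
    Matrix (Fin 6) (Fin (3 * r)) ℂ :=
  Matrix.of fun i c =>
    have hr : 0 < r := by have := c.isLt; by_contra h; omega
    let ℓ : Fin r := ⟨(c : ℕ) % r, Nat.mod_lt _ hr⟩
    let b : ℕ := (c : ℕ) / r
    if i = 0 then (if b = 0 then x 0 ℓ else 0)
    else if i = 1 then (if b = 1 then x 1 ℓ else 0)
    else if i = 2 then (if b = 2 then x 2 ℓ else 0)
    else if i = 3 then
      (if b = 0 then starRingEnd ℂ (x 1 ℓ) else if b = 1 then -starRingEnd ℂ (x 0 ℓ) else 0)
    else if i = 4 then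
      (if b = 0 then starRingEnd ℂ (x 2 ℓ) else if b = 2 then -starRingEnd ℂ (x 0 ℓ) else 0)
    else
      (if b = 1 then starRingEnd ℂ (x 2 ℓ) else if b = 2 then -starRingEnd ℂ (x 1 ℓ) else 0)


/-! ### Auxiliary machinery -/

section BlockOpAux

open ContinuousLinearMap

variable {H M : Type*} [NormedAddCommGroup H] [InnerProductSpace ℂ H]
    [NormedAddCommGroup M] [InnerProductSpace ℂ M]

theorem blockOp_apply' (T : H →L[ℂ] H) (A : M →L[ℂ] H) (B : M →L[ℂ] M) (h : H) (m : M) :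
    blockOp T A B ((WithLp.prodContinuousLinearEquiv 2 ℂ H M).symm (h, m))
      = (WithLp.prodContinuousLinearEquiv 2 ℂ H M).symm (T h + A m, B m) := rfl

theorem blockOp_norm_consequence {T : H →L[ℂ] H} {A : M →L[ℂ] H} {B : M →L[ℂ] M}
    (hc : ‖blockOp T A B‖ ≤ 1) (h : H) (m : M) :
    ‖T h + A m‖^2 + ‖B m‖^2 ≤ ‖h‖^2 + ‖m‖^2 := by
  have h2 : ‖blockOp T A B ((WithLp.prodContinuousLinearEquiv 2 ℂ H M).symm (h, m))‖
      ≤ ‖((WithLp.prodContinuousLinearEquiv 2 ℂ H M).symm (h, m) : WithLp 2 (H × M))‖ := by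
    calc _ ≤ ‖blockOp T A B‖ * ‖_‖ := (blockOp T A B).le_opNorm _
    _ ≤ 1 * _ := by apply mul_le_mul_of_nonneg_right hc (norm_nonneg _)
    _ = _ := one_mul _
  rw [blockOp_apply'] at h2
  have e1 : ‖((WithLp.prodContinuousLinearEquiv 2 ℂ H M).symm (T h + A m, B m) : WithLp 2 (H × M))‖^2
      = ‖T h + A m‖^2 + ‖B m‖^2 := by
    rw [WithLp.prod_norm_sq_eq_of_L2]; rfl
  have e2 : ‖((WithLp.prodContinuousLinearEquiv 2 ℂ H M).symm (h, m) : WithLp 2 (H × M))‖^2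
      = ‖h‖^2 + ‖m‖^2 := by
    rw [WithLp.prod_norm_sq_eq_of_L2]; rfl
  rw [← e1, ← e2]
  exact pow_le_pow_left₀ (norm_nonneg _) h2 2

theorem blockOp_norm_le {T : H →L[ℂ] H} {A : M →L[ℂ] H} {B : M →L[ℂ] M}
    (hc : ∀ (h : H) (m : M), ‖T h + A m‖^2 + ‖B m‖^2 ≤ ‖h‖^2 + ‖m‖^2) :
    ‖blockOp T A B‖ ≤ 1 := by
  rw [ContinuousLinearMap.opNorm_le_iff zero_le_one]
  intro p
  rw [one_mul]
  have hs : p = (WithLp.prodContinuousLinearEquiv 2 ℂ H M).symm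
      (((WithLp.prodContinuousLinearEquiv 2 ℂ H M) p).1,
       ((WithLp.prodContinuousLinearEquiv 2 ℂ H M) p).2) := by
    rw [Prod.mk.eta]
    exact ((WithLp.prodContinuousLinearEquiv 2 ℂ H M).symm_apply_apply p).symm
  set h := ((WithLp.prodContinuousLinearEquiv 2 ℂ H M) p).1
  set m := ((WithLp.prodContinuousLinearEquiv 2 ℂ H M) p).2
  rw [hs, blockOp_apply']
  have e1 : ‖((WithLp.prodContinuousLinearEquiv 2 ℂ H M).symm (T h + A m, B m) : WithLp 2 (H × M))‖^2
      = ‖T h + A m‖^2 + ‖B m‖^2 := by rw [WithLp.prod_norm_sq_eq_of_L2]; rfl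
  have e2 : ‖((WithLp.prodContinuousLinearEquiv 2 ℂ H M).symm (h, m) : WithLp 2 (H × M))‖^2
      = ‖h‖^2 + ‖m‖^2 := by rw [WithLp.prod_norm_sq_eq_of_L2]; rfl
  have hsq : ‖((WithLp.prodContinuousLinearEquiv 2 ℂ H M).symm (T h + A m, B m) : WithLp 2 (H × M))‖^2
      ≤ ‖((WithLp.prodContinuousLinearEquiv 2 ℂ H M).symm (h, m) : WithLp 2 (H × M))‖^2 := by
    rw [e1, e2]; exact hc h m
  exact (pow_le_pow_iff_left₀ (norm_nonneg _) (norm_nonneg _) two_ne_zero).1 hsq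

theorem blockOp_comp (T₁ T₂ : H →L[ℂ] H) (A₁ A₂ : M →L[ℂ] H) (B₁ B₂ : M →L[ℂ] M) :
    blockOp T₁ A₁ B₁ ∘L blockOp T₂ A₂ B₂
      = blockOp (T₁ ∘L T₂) (T₁ ∘L A₂ + A₁ ∘L B₂) (B₁ ∘L B₂) := by
  ext p
  have hs : p = (WithLp.prodContinuousLinearEquiv 2 ℂ H M).symm
      (((WithLp.prodContinuousLinearEquiv 2 ℂ H M) p).1,
       ((WithLp.prodContinuousLinearEquiv 2 ℂ H M) p).2) := by
    rw [Prod.mk.eta]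
    exact ((WithLp.prodContinuousLinearEquiv 2 ℂ H M).symm_apply_apply p).symm
  rw [hs, ContinuousLinearMap.comp_apply, blockOp_apply', blockOp_apply', blockOp_apply']
  apply congrArg
  refine Prod.ext ?_ rfl
  simp [map_add, add_assoc]

theorem blockOp_inj {T₁ T₂ : H →L[ℂ] H} {A₁ A₂ : M →L[ℂ] H} {B₁ B₂ : M →L[ℂ] M}
    (hb : blockOp T₁ A₁ B₁ = blockOp T₂ A₂ B₂) : T₁ = T₂ ∧ A₁ = A₂ ∧ B₁ = B₂ := by
  have key : ∀ (h : H) (m : M), (T₁ h + A₁ m, B₁ m) = (T₂ h + A₂ m, B₂ m) := by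
    intro h m
    have := congrArg (fun f : WithLp 2 (H × M) →L[ℂ] WithLp 2 (H × M) =>
      f ((WithLp.prodContinuousLinearEquiv 2 ℂ H M).symm (h, m))) hb
    simp only [blockOp_apply'] at this
    exact (WithLp.prodContinuousLinearEquiv 2 ℂ H M).symm.injective this
  refine ⟨?_, ?_, ?_⟩
  · ext h
    have := congrArg Prod.fst (key h 0)
    simpa using this
  · ext m
    have := congrArg Prod.fst (key 0 m)
    simpa using this
  · ext m
    exact congrArg Prod.snd (key 0 m)

end BlockOpAux

section VarAux

variable {L : Type*} [NormedAddCommGroup L] [InnerProductSpace ℂ L]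

theorem varOp_varMk (x xb : L) (c : ℂ) (v : L) (d : ℂ) :
    varOp x xb (varMk c v d) = varMk 0 (c • x) (inner ℂ xb v) := rfl

theorem varMk_add (c c' : ℂ) (v v' : L) (d d' : ℂ) :
    varMk c v d + varMk c' v' d' = varMk (c+c') (v+v') (d+d') := by
  simp [varMk, ← map_add]

theorem varMk_smul (t c : ℂ) (v : L) (d : ℂ) :
    t • (varMk c v d : VarSpace L) = varMk (t*c) (t•v) (t*d) := by
  simp [varMk, ← map_smul, Prod.smul_mk, smul_eq_mul]

theorem varMk_zero : (varMk 0 0 0 : VarSpace L) = 0 := by simp [varMk]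

theorem varMk_inj {c c' : ℂ} {v v' : L} {d d' : ℂ}
    (h : (varMk c v d : VarSpace L) = varMk c' v' d') : c = c' ∧ v = v' ∧ d = d' := by
  rw [varMk, varMk, (varEquiv L).symm.injective.eq_iff, Prod.mk.injEq, Prod.mk.injEq] at h
  tauto

theorem varMk_surj (h : VarSpace L) :
    h = varMk (varEquiv L h).1 (varEquiv L h).2.1 (varEquiv L h).2.2 := by
  simp [varMk]

theorem norm_varMk_sq (c : ℂ) (v : L) (d : ℂ) :
    ‖(varMk c v d : VarSpace L)‖^2 = ‖c‖^2 + ‖v‖^2 + ‖d‖^2 := by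
  have : (varMk c v d : VarSpace L)
      = (WithLp.toLp 2 (c, WithLp.toLp 2 (v, d)) : WithLp 2 (ℂ × WithLp 2 (L × ℂ))) := rfl
  rw [this, WithLp.prod_norm_sq_eq_of_L2]
  simp [WithLp.prod_norm_sq_eq_of_L2]
  ring

end VarAux

section EuclAux

open ComplexConjugate

variable {r : ℕ}

theorem euclConj_apply (a : EuclideanSpace ℂ (Fin r)) (ℓ : Fin r) :
    euclConj a ℓ = conj (a ℓ) := rfl

theorem norm_euclConj (a : EuclideanSpace ℂ (Fin r)) : ‖euclConj a‖ = ‖a‖ := by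
  simp [EuclideanSpace.norm_eq, euclConj_apply]

theorem inner_coords (a b : EuclideanSpace ℂ (Fin r)) :
    (inner ℂ a b : ℂ) = ∑ ℓ, conj (a ℓ) * b ℓ := by
  simp [PiLp.inner_apply, RCLike.inner_apply, mul_comm]

theorem inner_euclConj_left (a b : EuclideanSpace ℂ (Fin r)) :
    (inner ℂ (euclConj a) b : ℂ) = ∑ ℓ, a ℓ * b ℓ := by
  simp [inner_coords, euclConj_apply]

theorem inner_euclConj_symm (a b : EuclideanSpace ℂ (Fin r)) :
    (inner ℂ (euclConj a) b : ℂ) = inner ℂ (euclConj b) a := by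
  rw [inner_euclConj_left, inner_euclConj_left]
  exact Finset.sum_congr rfl (fun ℓ _ => mul_comm _ _)

end EuclAux

section MatrixAux

variable {r : ℕ}

/-- The equivalence `Fin 3 × Fin r ≃ Fin (3*r)`, `(b, ℓ) ↦ b*r + ℓ`. -/
def embed3 (r : ℕ) : Fin 3 × Fin r ≃ Fin (3 * r) where
  toFun p := ⟨p.1.val * r + p.2.val, by obtain ⟨⟨b,hb⟩,⟨l,hl⟩⟩ := p; simp; nlinarith⟩
  invFun c := ⟨⟨c.val / r, by have := c.isLt; apply Nat.div_lt_of_lt_mul; omega⟩,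
    ⟨c.val % r, Nat.mod_lt _ (by have := c.isLt; by_contra h; omega)⟩⟩
  left_inv p := by
    obtain ⟨⟨b,hb⟩,⟨l,hl⟩⟩ := p
    have hr : 0 < r := by omega
    have h1 : (b * r + l) / r = b := by
      rw [Nat.add_div hr]
      simp [Nat.mul_div_cancel _ hr, Nat.mul_mod_left, Nat.mod_eq_of_lt hl,
        Nat.div_eq_of_lt hl]
      omega
    have h2 : (b * r + l) % r = l := by
      rw [Nat.add_mod, Nat.mul_mod_left]
      simp [Nat.mod_eq_of_lt hl]
    simp only [Prod.mk.injEq]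
    constructor <;> ext <;> simp [h1, h2]
  right_inv c := by
    ext
    show (c : ℕ) / r * r + (c : ℕ) % r = c
    rw [Nat.mul_comm]; exact Nat.div_add_mod _ _

theorem emb_div (b : Fin 3) (ℓ : Fin r) : ((embed3 r (b, ℓ) : Fin (3*r)) : ℕ) / r = b := by
  have hr : 0 < r := by have := ℓ.isLt; omega
  show ((b : ℕ) * r + ℓ) / r = b
  rw [Nat.add_div hr]
  simp [Nat.mul_div_cancel _ hr, Nat.mul_mod_left, Nat.mod_eq_of_lt ℓ.isLt,
    Nat.div_eq_of_lt ℓ.isLt]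

theorem emb_mod (b : Fin 3) (ℓ : Fin r) : ((embed3 r (b, ℓ) : Fin (3*r)) : ℕ) % r = ℓ := by
  show ((b : ℕ) * r + ℓ) % r = ℓ
  rw [Nat.add_mod, Nat.mul_mod_left]
  simp [Nat.mod_eq_of_lt ℓ.isLt]

theorem lambda_apply_embed (x : Fin 3 → EuclideanSpace ℂ (Fin r)) (i : Fin 6) (b : Fin 3)
    (ℓ : Fin r) : lambdaMatrix x i (embed3 r (b, ℓ)) =
    (if i = 0 then (if (b:ℕ) = 0 then x 0 ℓ else 0)
    else if i = 1 then (if (b:ℕ) = 1 then x 1 ℓ else 0)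
    else if i = 2 then (if (b:ℕ) = 2 then x 2 ℓ else 0)
    else if i = 3 then
      (if (b:ℕ) = 0 then starRingEnd ℂ (x 1 ℓ) else if (b:ℕ) = 1 then -starRingEnd ℂ (x 0 ℓ) else 0)
    else if i = 4 then
      (if (b:ℕ) = 0 then starRingEnd ℂ (x 2 ℓ) else if (b:ℕ) = 2 then -starRingEnd ℂ (x 0 ℓ) else 0)
    else
      (if (b:ℕ) = 1 then starRingEnd ℂ (x 2 ℓ) else if (b:ℕ) = 2 then -starRingEnd ℂ (x 1 ℓ) else 0)) := by
  have h1 := emb_div b ℓ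
  have h2 := emb_mod b ℓ
  have h3 : ∀ (p : ((embed3 r (b, ℓ) : Fin (3*r)) : ℕ) % r < r),
      (⟨((embed3 r (b, ℓ) : Fin (3*r)) : ℕ) % r, p⟩ : Fin r) = ℓ := fun p => Fin.ext h2
  simp only [lambdaMatrix, Matrix.of_apply, h1]
  rw [h3]

theorem mulVec_lambda (x : Fin 3 → EuclideanSpace ℂ (Fin r)) (z : Fin (3*r) → ℂ) :
    (lambdaMatrix x).mulVec z = ![
      ∑ ℓ, x 0 ℓ * z (embed3 r (0, ℓ)),
      ∑ ℓ, x 1 ℓ * z (embed3 r (1, ℓ)),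
      ∑ ℓ, x 2 ℓ * z (embed3 r (2, ℓ)),
      (∑ ℓ, starRingEnd ℂ (x 1 ℓ) * z (embed3 r (0, ℓ)))
        - ∑ ℓ, starRingEnd ℂ (x 0 ℓ) * z (embed3 r (1, ℓ)),
      (∑ ℓ, starRingEnd ℂ (x 2 ℓ) * z (embed3 r (0, ℓ)))
        - ∑ ℓ, starRingEnd ℂ (x 0 ℓ) * z (embed3 r (2, ℓ)),
      (∑ ℓ, starRingEnd ℂ (x 2 ℓ) * z (embed3 r (1, ℓ)))
        - ∑ ℓ, starRingEnd ℂ (x 1 ℓ) * z (embed3 r (2, ℓ))] := by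
  funext i
  show ∑ c, lambdaMatrix x i c * z c = _
  rw [← Fintype.sum_equiv (embed3 r) (fun p => lambdaMatrix x i (embed3 r p) * z (embed3 r p))
      (fun c => lambdaMatrix x i c * z c) (fun p => rfl)]
  rw [Fintype.sum_prod_type, Fin.sum_univ_three]
  fin_cases i <;>
    simp [lambda_apply_embed, Finset.sum_sub_distrib, sub_eq_add_neg, Finset.sum_neg_distrib,
      Matrix.cons_val_succ] <;> rfl

end MatrixAux


section Necessary

open ComplexConjugate

variable {r : ℕ}

theorem norm_tu_smul_add_sq {E : Type*} [NormedAddCommGroup E] [InnerProductSpace ℂ E]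
    (x v : E) (hx : ‖x‖ = 1) (t : ℝ) (ht : 0 ≤ t) :
    ‖((t:ℂ) * (inner ℂ x v : ℂ)) • x + v‖^2
      = t^2*‖(inner ℂ x v : ℂ)‖^2 + 2*t*‖(inner ℂ x v : ℂ)‖^2 + ‖v‖^2 := by
  set u : ℂ := inner ℂ x v with hu
  rw [norm_add_sq (𝕜:=ℂ), inner_smul_left, norm_smul, hx]
  have h2 : (starRingEnd ℂ) ((t:ℂ)*u) * (inner ℂ x v : ℂ) = (t:ℂ) * ((‖u‖:ℂ))^2 := by
    rw [map_mul, Complex.conj_ofReal, ← hu, mul_assoc, RCLike.conj_mul u]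
    norm_num
  rw [h2]
  have h4 : ‖(t:ℂ)*u‖ = t * ‖u‖ := by
    rw [norm_mul, Complex.norm_real, Real.norm_of_nonneg ht]
  have h3 : RCLike.re (((t * ‖u‖^2 : ℝ) : ℂ)) = t * ‖u‖^2 := Complex.ofReal_re _
  rw [h4, show ((t:ℂ) * (‖u‖:ℂ)^2) = ((t * ‖u‖^2 : ℝ) : ℂ) by push_cast; ring, h3]
  ring

set_option maxHeartbeats 1000000 in
theorem necessary {x : EuclideanSpace ℂ (Fin r)} (hx : ‖x‖ = 1)
    {M : Type*} [NormedAddCommGroup M] [InnerProductSpace ℂ M]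
    {A : M →L[ℂ] (VarSpace (EuclideanSpace ℂ (Fin r)))} {B : M →L[ℂ] M}
    (hc : ‖blockOp (varOp x (euclConj x)) A B‖ ≤ 1) (m : M) :
    (varEquiv _ (A m)).2.2 = 0 ∧ (inner ℂ x ((varEquiv _ (A m)).2.1) : ℂ) = 0 := by
  set c : ℂ := (varEquiv _ (A m)).1 with hc'
  set v := (varEquiv _ (A m)).2.1 with hv'
  set d : ℂ := (varEquiv _ (A m)).2.2 with hd'
  have hAm : A m = varMk c v d := varMk_surj (A m)
  set u : ℂ := inner ℂ x v with hu'
  have hxb : ‖euclConj x‖ = 1 := by rw [norm_euclConj, hx]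
  have key : ∀ t : ℝ, 0 ≤ t → 2*t*(‖u‖^2 + ‖d‖^2) ≤ ‖m‖^2 := by
    intro t ht
    have H := blockOp_norm_consequence hc (varMk ((t:ℂ)*u) (((t:ℂ)*d) • euclConj x) 0) m
    rw [varOp_varMk] at H
    have h1 : (inner ℂ (euclConj x) ((((t:ℂ)*d)) • euclConj x) : ℂ) = (t:ℂ)*d := by
      rw [inner_smul_right, inner_self_eq_norm_sq_to_K, hxb]
      norm_num
    rw [h1, hAm, varMk_add] at H
    rw [norm_varMk_sq, norm_varMk_sq] at H
    have e1 : ‖((t:ℂ)*u) • x + v‖^2 = t^2*‖u‖^2 + 2*t*‖u‖^2 + ‖v‖^2 := by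
      have := norm_tu_smul_add_sq x v hx t ht
      rw [← hu'] at this
      exact this
    have e2 : ‖(t:ℂ)*d + d‖^2 = (t+1)^2*‖d‖^2 := by
      have : (t:ℂ)*d + d = ((t:ℂ)+1)*d := by ring
      rw [this, norm_mul]
      have : ‖(t:ℂ)+1‖ = t+1 := by
        rw [show ((t:ℂ)+1) = ((t+1 : ℝ) : ℂ) by push_cast; ring, Complex.norm_real,
          Real.norm_of_nonneg (by linarith)]
      rw [this]
      ring
    have e3 : ‖((t:ℂ)*d) • euclConj x‖^2 = t^2*‖d‖^2 := by
      rw [norm_smul, hxb, norm_mul, Complex.norm_real, Real.norm_of_nonneg ht]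
      ring
    have e4 : ‖(t:ℂ)*u‖^2 = t^2*‖u‖^2 := by
      rw [norm_mul, Complex.norm_real, Real.norm_of_nonneg ht]; ring
    rw [zero_add, e1, e2, e3, e4] at H
    simp only [norm_zero] at H
    have hB : (0:ℝ) ≤ ‖B m‖^2 := by positivity
    have hc0 : (0:ℝ) ≤ ‖c‖^2 := by positivity
    have hv0 : (0:ℝ) ≤ ‖v‖^2 := by positivity
    nlinarith [H, hB, hc0, hv0]
  have hud : ‖u‖^2 + ‖d‖^2 ≤ 0 := by
    by_contra hpos
    push_neg at hpos
    have hε : 0 < ‖u‖^2 + ‖d‖^2 := hpos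
    have hk := key ((‖m‖^2+1)/(2*(‖u‖^2 + ‖d‖^2))) (by positivity)
    have hne : (2*(‖u‖^2 + ‖d‖^2)) ≠ 0 := by positivity
    have h2 : 2 * ((‖m‖^2+1)/(2*(‖u‖^2 + ‖d‖^2))) * (‖u‖^2 + ‖d‖^2) = ‖m‖^2+1 := by
      rw [show 2 * ((‖m‖^2+1)/(2*(‖u‖^2 + ‖d‖^2))) * (‖u‖^2 + ‖d‖^2)
          = ((‖m‖^2+1)/(2*(‖u‖^2 + ‖d‖^2))) * (2*(‖u‖^2 + ‖d‖^2)) from by ring,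
        div_mul_cancel₀ _ hne]
    rw [h2] at hk
    linarith
  constructor
  · have h5 : ‖d‖^2 = 0 := le_antisymm (by linarith [sq_nonneg ‖u‖]) (sq_nonneg _)
    have h6 : ‖d‖ = 0 := pow_eq_zero_iff two_ne_zero |>.1 h5
    exact norm_eq_zero.1 h6
  · have h5 : ‖u‖^2 = 0 := le_antisymm (by linarith [sq_nonneg ‖d‖]) (sq_nonneg _)
    have h6 : ‖u‖ = 0 := pow_eq_zero_iff two_ne_zero |>.1 h5
    exact norm_eq_zero.1 h6

end Necessary


section LinAlg

open ComplexConjugate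

variable {r : ℕ}

theorem sum_mul_conj_eq (a v : EuclideanSpace ℂ (Fin r)) :
    (∑ ℓ, a ℓ * conj (v ℓ)) = conj ((inner ℂ a v : ℂ)) := by
  rw [inner_coords, map_sum]
  exact Finset.sum_congr rfl fun ℓ _ => by rw [map_mul, Complex.conj_conj]

theorem sum_conj_mul_conj_eq (a v : EuclideanSpace ℂ (Fin r)) :
    (∑ ℓ, conj (a ℓ) * conj (v ℓ)) = conj ((inner ℂ (euclConj a) v : ℂ)) := by
  rw [inner_euclConj_left, map_sum]
  exact Finset.sum_congr rfl fun ℓ _ => by rw [map_mul]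

theorem kernel_forces_V {x : Fin 3 → EuclideanSpace ℂ (Fin r)}
    (hker : ∀ z : Fin (3 * r) → ℂ, (lambdaMatrix x).mulVec z = 0 → z = 0)
    (V : Fin 3 → EuclideanSpace ℂ (Fin r))
    (h1 : ∀ i, (inner ℂ (x i) (V i) : ℂ) = 0)
    (h2 : ∀ i j, (inner ℂ (euclConj (x i)) (V j) : ℂ) = inner ℂ (euclConj (x j)) (V i)) :
    ∀ i, V i = 0 := by
  set z : Fin (3*r) → ℂ :=
    fun c => conj (V ((embed3 r).symm c).1 (((embed3 r).symm c).2)) with hzdef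
  have hz : ∀ b ℓ, z (embed3 r (b, ℓ)) = conj (V b ℓ) := by
    intro b ℓ
    show conj (V ((embed3 r).symm ((embed3 r) (b, ℓ))).1 (((embed3 r).symm ((embed3 r) (b, ℓ))).2)) = _
    rw [Equiv.symm_apply_apply]
  have hmv : (lambdaMatrix x).mulVec z = 0 := by
    rw [mulVec_lambda]
    funext i
    fin_cases i <;> simp only [Pi.zero_apply]
    · show (∑ ℓ, x 0 ℓ * z (embed3 r (0, ℓ))) = 0
      simp only [hz]
      rw [sum_mul_conj_eq, h1, map_zero]
    · show (∑ ℓ, x 1 ℓ * z (embed3 r (1, ℓ))) = 0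
      simp only [hz]
      rw [sum_mul_conj_eq, h1, map_zero]
    · show (∑ ℓ, x 2 ℓ * z (embed3 r (2, ℓ))) = 0
      simp only [hz]
      rw [sum_mul_conj_eq, h1, map_zero]
    · show (∑ ℓ, conj (x 1 ℓ) * z (embed3 r (0, ℓ)))
        - (∑ ℓ, conj (x 0 ℓ) * z (embed3 r (1, ℓ))) = 0
      simp only [hz]
      rw [sum_conj_mul_conj_eq, sum_conj_mul_conj_eq, h2 1 0, sub_self]
    · show (∑ ℓ, conj (x 2 ℓ) * z (embed3 r (0, ℓ)))
        - (∑ ℓ, conj (x 0 ℓ) * z (embed3 r (2, ℓ))) = 0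
      simp only [hz]
      rw [sum_conj_mul_conj_eq, sum_conj_mul_conj_eq, h2 2 0, sub_self]
    · show (∑ ℓ, conj (x 2 ℓ) * z (embed3 r (1, ℓ)))
        - (∑ ℓ, conj (x 1 ℓ) * z (embed3 r (2, ℓ))) = 0
      simp only [hz]
      rw [sum_conj_mul_conj_eq, sum_conj_mul_conj_eq, h2 2 1, sub_self]
  have hz0 := hker z hmv
  intro i
  ext ℓ
  have := congrFun hz0 (embed3 r (i, ℓ))
  rw [hz] at this
  simpa using congrArg conj this

theorem ker_rank {x : Fin 3 → EuclideanSpace ℂ (Fin r)}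
    (hker : ∀ z : Fin (3 * r) → ℂ, (lambdaMatrix x).mulVec z = 0 → z = 0) : r ≤ 2 := by
  have hinj : Function.Injective ((lambdaMatrix x).mulVecLin) := by
    apply LinearMap.ker_eq_bot.1
    apply LinearMap.ker_eq_bot'.mpr
    intro z hz
    exact hker z hz
  have := LinearMap.finrank_le_finrank_of_injective hinj
  simp [Module.finrank_pi] at this
  omega

theorem parallel_ker {x : Fin 3 → EuclideanSpace ℂ (Fin 2)}
    (hx : ∀ i, ‖x i‖ = 1)
    (hker : ∀ z : Fin (3 * 2) → ℂ, (lambdaMatrix x).mulVec z = 0 → z = 0)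
    (c : Fin 3 → ℂ) (hcc : ∀ i j, c j • x i = c i • x j) : ∀ i, c i = 0 := by
  by_contra hcon
  push_neg at hcon
  obtain ⟨k, hk⟩ := hcon
  set y := x k with hy
  set μ : Fin 3 → ℂ := fun i => c i / c k with hμ
  have hxi : ∀ i, x i = μ i • y := by
    intro i
    calc x i = (c k)⁻¹ • (c k • x i) := by rw [smul_smul, inv_mul_cancel₀ hk, one_smul]
    _ = (c k)⁻¹ • (c i • x k) := by rw [hcc i k]
    _ = μ i • y := by rw [smul_smul, hμ, ← hy]; congr 1; field_simp
  have hxiℓ : ∀ i ℓ, x i ℓ = μ i * y ℓ := by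
    intro i ℓ
    conv_lhs => rw [hxi i]
    rfl
  set w : EuclideanSpace ℂ (Fin 2) := (WithLp.equiv 2 _).symm ![y 1, -(y 0)] with hw
  have hw0 : w 0 = y 1 := rfl
  have hw1 : w 1 = -(y 0) := rfl
  have hsum : (∑ ℓ, y ℓ * w ℓ) = 0 := by
    rw [Fin.sum_univ_two, hw0, hw1]; ring
  set z : Fin (3*2) → ℂ :=
    fun cc => conj (μ ((embed3 2).symm cc).1) * w (((embed3 2).symm cc).2) with hzdef
  have hz : ∀ b ℓ, z (embed3 2 (b, ℓ)) = conj (μ b) * w ℓ := by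
    intro b ℓ
    show conj (μ ((embed3 2).symm ((embed3 2) (b, ℓ))).1) * w (((embed3 2).symm ((embed3 2) (b, ℓ))).2) = _
    rw [Equiv.symm_apply_apply]
  have hrow1 : ∀ i : Fin 3, (∑ ℓ, x i ℓ * (conj (μ i) * w ℓ)) = 0 := by
    intro i
    have : (∑ ℓ, x i ℓ * (conj (μ i) * w ℓ))
        = (μ i * conj (μ i)) * ∑ ℓ, y ℓ * w ℓ := by
      rw [Finset.mul_sum]
      exact Finset.sum_congr rfl fun ℓ _ => by rw [hxiℓ]; ring
    rw [this, hsum, mul_zero]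
  have hrow2 : ∀ i j a b : Fin 3,
      (∑ ℓ, conj (x i ℓ) * (conj (μ a) * w ℓ)) - (∑ ℓ, conj (x j ℓ) * (conj (μ b) * w ℓ))
        = (conj (μ i) * conj (μ a) - conj (μ j) * conj (μ b)) * ∑ ℓ, conj (y ℓ) * w ℓ := by
    intro i j a b
    rw [sub_mul, Finset.mul_sum, Finset.mul_sum]
    congr 1 <;>
      exact Finset.sum_congr rfl fun ℓ _ => by rw [hxiℓ, map_mul]; ring
  have hmv : (lambdaMatrix x).mulVec z = 0 := by
    rw [mulVec_lambda]
    funext i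
    fin_cases i <;> simp only [Pi.zero_apply]
    · show (∑ ℓ, x 0 ℓ * z (embed3 2 (0, ℓ))) = 0
      simp only [hz]; exact hrow1 0
    · show (∑ ℓ, x 1 ℓ * z (embed3 2 (1, ℓ))) = 0
      simp only [hz]; exact hrow1 1
    · show (∑ ℓ, x 2 ℓ * z (embed3 2 (2, ℓ))) = 0
      simp only [hz]; exact hrow1 2
    · show (∑ ℓ, conj (x 1 ℓ) * z (embed3 2 (0, ℓ)))
        - (∑ ℓ, conj (x 0 ℓ) * z (embed3 2 (1, ℓ))) = 0
      simp only [hz]; rw [hrow2 1 0 0 1]; ring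
    · show (∑ ℓ, conj (x 2 ℓ) * z (embed3 2 (0, ℓ)))
        - (∑ ℓ, conj (x 0 ℓ) * z (embed3 2 (2, ℓ))) = 0
      simp only [hz]; rw [hrow2 2 0 0 2]; ring
    · show (∑ ℓ, conj (x 2 ℓ) * z (embed3 2 (1, ℓ)))
        - (∑ ℓ, conj (x 1 ℓ) * z (embed3 2 (2, ℓ))) = 0
      simp only [hz]; rw [hrow2 2 1 1 2]; ring
  have hz0 := hker z hmv
  have hμk : μ k = 1 := by rw [hμ]; exact div_self hk
  have hwℓ : ∀ ℓ : Fin 2, w ℓ = 0 := by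
    intro ℓ
    have := congrFun hz0 (embed3 2 (k, ℓ))
    rw [hz, hμk] at this
    simpa using this
  have hy0 : y 0 = 0 := by have := hwℓ 1; rw [hw1] at this; simpa using this
  have hy1 : y 1 = 0 := by have := hwℓ 0; rw [hw0] at this; exact this
  have hyz : y = 0 := by
    ext ℓ
    fin_cases ℓ
    · exact hy0
    · exact hy1
  have := hx k
  rw [← hy, hyz] at this
  simp at this

end LinAlg


section Constructions

open ComplexConjugate ContinuousLinearMap

variable {r : ℕ}

theorem constr_contraction {x : EuclideanSpace ℂ (Fin r)} (hx : ‖x‖ = 1)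
    {cc : ℂ} {v : EuclideanSpace ℂ (Fin r)} (hv : (inner ℂ x v : ℂ) = 0)
    (hle : ‖cc‖^2 + ‖v‖^2 ≤ 1) (h : VarSpace (EuclideanSpace ℂ (Fin r))) (t : ℂ) :
    ‖varOp x (euclConj x) h + t • varMk cc v 0‖^2 ≤ ‖h‖^2 + ‖t‖^2 := by
  rw [varMk_surj h, varOp_varMk, varMk_smul, mul_zero, varMk_add, zero_add, add_zero,
    norm_varMk_sq, norm_varMk_sq]
  set a := (varEquiv (EuclideanSpace ℂ (Fin r)) h).1
  set w := (varEquiv (EuclideanSpace ℂ (Fin r)) h).2.1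
  set b := (varEquiv (EuclideanSpace ℂ (Fin r)) h).2.2
  have e1 : ‖a • x + t • v‖^2 = ‖a • x‖^2 + ‖t • v‖^2 := by
    rw [norm_add_sq (𝕜:=ℂ), inner_smul_left, inner_smul_right, hv]
    simp
  have e2 : ‖a • x‖ = ‖a‖ := by rw [norm_smul, hx, mul_one]
  have e3 : ‖t • v‖^2 = ‖t‖^2 * ‖v‖^2 := by rw [norm_smul, mul_pow]
  have e4 : ‖(inner ℂ (euclConj x) w : ℂ)‖ ≤ ‖w‖ := by
    calc ‖(inner ℂ (euclConj x) w : ℂ)‖ ≤ ‖euclConj x‖ * ‖w‖ := norm_inner_le_norm _ _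
    _ = ‖w‖ := by rw [norm_euclConj, hx, one_mul]
  have e4' : ‖(inner ℂ (euclConj x) w : ℂ)‖^2 ≤ ‖w‖^2 :=
    pow_le_pow_left₀ (norm_nonneg _) e4 2
  have e5 : ‖t * cc‖^2 = ‖t‖^2 * ‖cc‖^2 := by rw [norm_mul, mul_pow]
  rw [e1, e2, e3, e5]
  have hb : (0:ℝ) ≤ ‖b‖^2 := by positivity
  nlinarith [sq_nonneg ‖t‖, e4', hb]

theorem varOp_comm (x : Fin 3 → EuclideanSpace ℂ (Fin r)) (i j : Fin 3) :
    varOp (x i) (euclConj (x i)) ∘L varOp (x j) (euclConj (x j))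
      = varOp (x j) (euclConj (x j)) ∘L varOp (x i) (euclConj (x i)) := by
  ext p
  rw [ContinuousLinearMap.comp_apply, ContinuousLinearMap.comp_apply, varMk_surj p,
    varOp_varMk, varOp_varMk, varOp_varMk, varOp_varMk, zero_smul, zero_smul,
    inner_smul_right, inner_smul_right, inner_euclConj_symm (x i) (x j)]

theorem not_extremal_of_data (x : Fin 3 → EuclideanSpace ℂ (Fin r)) (hx : ∀ i, ‖x i‖ = 1)
    (c : Fin 3 → ℂ) (v : Fin 3 → EuclideanSpace ℂ (Fin r))
    (P1 : ∀ i, (inner ℂ (x i) (v i) : ℂ) = 0)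
    (P2 : ∀ i, ‖c i‖^2 + ‖v i‖^2 ≤ 1)
    (P3 : ∀ i j, c j • x i = c i • x j)
    (P4 : ∀ i j, (inner ℂ (euclConj (x i)) (v j) : ℂ) = inner ℂ (euclConj (x j)) (v i))
    (i0 : Fin 3) (hnz : ¬(c i0 = 0 ∧ v i0 = 0))
    (hext : IsExtremal (fun i : Fin 3 => varOp (x i) (euclConj (x i)))) : False := by
  classical
  set M := EuclideanSpace ℂ (ULift (Fin 1)) with hM
  set e₀ : M := EuclideanSpace.single (ULift.up 0) (1:ℂ) with he₀def
  have he₀ : ‖e₀‖ = 1 := by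
    rw [he₀def]
    exact (EuclideanSpace.norm_single _ _).trans norm_one
  set A : Fin 3 → M →L[ℂ] VarSpace (EuclideanSpace ℂ (Fin r)) :=
    fun i => (innerSL ℂ e₀).smulRight (varMk (c i) (v i) 0) with hA
  set B : Fin 3 → M →L[ℂ] M := fun _ => 0 with hB
  have hApp : ∀ i m, A i m = (inner ℂ e₀ m : ℂ) • varMk (c i) (v i) 0 := fun i m => rfl
  have hnorm : ∀ i, ‖blockOp (varOp (x i) (euclConj (x i))) (A i) (B i)‖ ≤ 1 := by
    intro i
    apply blockOp_norm_le
    intro h m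
    rw [hApp]
    have h1 := constr_contraction (hx i) (P1 i) (P2 i) h ((inner ℂ e₀ m : ℂ))
    have h2 : ‖(inner ℂ e₀ m : ℂ)‖ ≤ ‖m‖ := by
      calc ‖(inner ℂ e₀ m : ℂ)‖ ≤ ‖e₀‖ * ‖m‖ := norm_inner_le_norm _ _
      _ = ‖m‖ := by rw [he₀, one_mul]
    have h2' : ‖(inner ℂ e₀ m : ℂ)‖^2 ≤ ‖m‖^2 := pow_le_pow_left₀ (norm_nonneg _) h2 2
    have h3 : ‖B i m‖^2 = 0 := by simp [hB]
    rw [h3]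
    linarith
  have hTa : ∀ i j, varOp (x i) (euclConj (x i)) (varMk (c j) (v j) 0)
      = varOp (x j) (euclConj (x j)) (varMk (c i) (v i) 0) := by
    intro i j
    rw [varOp_varMk, varOp_varMk, P3 i j, P4 i j]
  have hcomm : ∀ i j, blockOp (varOp (x i) (euclConj (x i))) (A i) (B i)
        ∘L blockOp (varOp (x j) (euclConj (x j))) (A j) (B j)
      = blockOp (varOp (x j) (euclConj (x j))) (A j) (B j)
        ∘L blockOp (varOp (x i) (euclConj (x i))) (A i) (B i) := by
    intro i j
    rw [blockOp_comp, blockOp_comp]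
    have hT := varOp_comm x i j
    have hAmix : varOp (x i) (euclConj (x i)) ∘L A j + A i ∘L B j
        = varOp (x j) (euclConj (x j)) ∘L A i + A j ∘L B i := by
      rw [hB]
      simp only [ContinuousLinearMap.comp_zero, add_zero]
      ext m
      rw [ContinuousLinearMap.comp_apply, ContinuousLinearMap.comp_apply, hApp, hApp,
        map_smul, map_smul, hTa i j]
    rw [hT, hAmix]
  have hA0 := hext M A B hnorm hcomm i0
  have : A i0 e₀ = 0 := by rw [hA0]; rfl
  rw [hApp] at this
  have hee : (inner ℂ e₀ e₀ : ℂ) = 1 := by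
    rw [inner_self_eq_norm_sq_to_K, he₀]; norm_num
  rw [hee, one_smul] at this
  rw [← varMk_zero] at this
  exact hnz ⟨(varMk_inj this).1, (varMk_inj this).2.1⟩

end Constructions

set_option maxHeartbeats 4000000

/-- For unit vectors `x_1, x_2, x_3 ∈ ℂ^r` such that `x_1, x_2, x_3, x̄_1, x̄_2, x̄_3`
span `ℂ^r`, the Varopoulos triple is extremal iff `r = 2` and `Λ` has trivial kernel. -/
theorem statement14 {r : ℕ} (hr : 1 ≤ r)
    (x : Fin 3 → EuclideanSpace ℂ (Fin r)) (hx : ∀ i, ‖x i‖ = 1)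
    (hspan : Submodule.span ℂ
        ({x 0, x 1, x 2, euclConj (x 0), euclConj (x 1), euclConj (x 2)} :
          Set (EuclideanSpace ℂ (Fin r))) = ⊤) :
    IsExtremal (fun i : Fin 3 => varOp (x i) (euclConj (x i))) ↔
      (r = 2 ∧ ∀ z : Fin (3 * r) → ℂ, (lambdaMatrix x).mulVec z = 0 → z = 0) := by
  classical
  constructor
  · -- extremal → r = 2 ∧ trivial kernel
    intro hext
    have hker : ∀ z : Fin (3 * r) → ℂ, (lambdaMatrix x).mulVec z = 0 → z = 0 := by
      intro z hz
      by_contra hz0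
      have hzero : ∃ cc, z cc ≠ 0 := by
        by_contra hall
        push_neg at hall
        exact hz0 (funext hall)
      obtain ⟨cc, hcc⟩ := hzero
      set W : Fin 3 → EuclideanSpace ℂ (Fin r) :=
        fun b => (WithLp.equiv 2 (Fin r → ℂ)).symm
          (fun ℓ => starRingEnd ℂ (z (embed3 r (b, ℓ)))) with hW
      have hWapp : ∀ b ℓ, W b ℓ = starRingEnd ℂ (z (embed3 r (b, ℓ))) := fun b ℓ => rfl
      set S : ℝ := ‖W 0‖ + ‖W 1‖ + ‖W 2‖ with hS
      have hS0 : (0:ℝ) ≤ S := by positivity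
      have hS1 : ((S+1 : ℝ) : ℂ) ≠ 0 := Complex.ofReal_ne_zero.mpr (by linarith)
      set σ : ℂ := ((S+1 : ℝ) : ℂ)⁻¹ with hσ
      have hσ0 : σ ≠ 0 := inv_ne_zero hS1
      set v : Fin 3 → EuclideanSpace ℂ (Fin r) := fun b => σ • W b with hv
      rw [mulVec_lambda] at hz
      have row : ∀ i : Fin 3, (∑ ℓ, x i ℓ * z (embed3 r (i, ℓ))) = 0 := by
        intro i
        fin_cases i
        · exact congrFun hz 0
        · exact congrFun hz 1
        · exact congrFun hz 2
      have h3 : (∑ ℓ, starRingEnd ℂ (x 1 ℓ) * z (embed3 r (0, ℓ)))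
          = ∑ ℓ, starRingEnd ℂ (x 0 ℓ) * z (embed3 r (1, ℓ)) :=
        sub_eq_zero.mp (congrFun hz 3)
      have h4 : (∑ ℓ, starRingEnd ℂ (x 2 ℓ) * z (embed3 r (0, ℓ)))
          = ∑ ℓ, starRingEnd ℂ (x 0 ℓ) * z (embed3 r (2, ℓ)) :=
        sub_eq_zero.mp (congrFun hz 4)
      have h5 : (∑ ℓ, starRingEnd ℂ (x 2 ℓ) * z (embed3 r (1, ℓ)))
          = ∑ ℓ, starRingEnd ℂ (x 1 ℓ) * z (embed3 r (2, ℓ)) :=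
        sub_eq_zero.mp (congrFun hz 5)
      have hinner : ∀ b j : Fin 3, (inner ℂ (x b) (W j) : ℂ)
          = starRingEnd ℂ (∑ ℓ, x b ℓ * z (embed3 r (j, ℓ))) := by
        intro b j
        rw [inner_coords, map_sum]
        exact Finset.sum_congr rfl fun ℓ _ => by rw [hWapp, map_mul]
      have hCW : ∀ b j : Fin 3, (inner ℂ (euclConj (x b)) (W j) : ℂ)
          = starRingEnd ℂ (∑ ℓ, starRingEnd ℂ (x b ℓ) * z (embed3 r (j, ℓ))) := by
        intro b j
        rw [inner_euclConj_left, map_sum]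
        exact Finset.sum_congr rfl fun ℓ _ => by
          rw [hWapp, map_mul, Complex.conj_conj]
      have P1 : ∀ i, (inner ℂ (x i) (v i) : ℂ) = 0 := by
        intro i
        show (inner ℂ (x i) (σ • W i) : ℂ) = 0
        rw [inner_smul_right, hinner i i, row i, map_zero, mul_zero]
      have hWle : ∀ i : Fin 3, ‖W i‖ ≤ S := by
        have l0 : ‖W 0‖ ≤ S := by rw [hS]; nlinarith [norm_nonneg (W 1), norm_nonneg (W 2)]
        have l1 : ‖W 1‖ ≤ S := by rw [hS]; nlinarith [norm_nonneg (W 0), norm_nonneg (W 2)]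
        have l2 : ‖W 2‖ ≤ S := by rw [hS]; nlinarith [norm_nonneg (W 0), norm_nonneg (W 1)]
        intro i
        fin_cases i
        exacts [l0, l1, l2]
      have hσn : ‖σ‖ = (S+1)⁻¹ := by
        rw [hσ, norm_inv, Complex.norm_real, Real.norm_of_nonneg (by linarith)]
      have P2 : ∀ i, ‖(0:ℂ)‖^2 + ‖v i‖^2 ≤ 1 := by
        intro i
        have hn : ‖v i‖ = (S+1)⁻¹ * ‖W i‖ := by
          show ‖σ • W i‖ = _
          rw [norm_smul, hσn]
        have hinv : (S+1) * (S+1)⁻¹ = 1 := mul_inv_cancel₀ (by linarith)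
        have hb : ‖v i‖ ≤ 1 := by
          rw [hn]
          have := hWle i
          have hp : (0:ℝ) ≤ (S+1)⁻¹ := by positivity
          nlinarith [norm_nonneg (W i)]
        rw [norm_zero]
        nlinarith [norm_nonneg (v i)]
      have P3 : ∀ i j : Fin 3, (0:ℂ) • x i = (0:ℂ) • x j := by
        intro i j
        rw [zero_smul, zero_smul]
      have P4W : ∀ i j : Fin 3, (inner ℂ (euclConj (x i)) (W j) : ℂ)
          = inner ℂ (euclConj (x j)) (W i) := by
        intro i j
        fin_cases i <;> fin_cases j
        · rfl
        · rw [hCW, hCW]; exact (congrArg (starRingEnd ℂ) h3).symm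
        · rw [hCW, hCW]; exact (congrArg (starRingEnd ℂ) h4).symm
        · rw [hCW, hCW]; exact congrArg (starRingEnd ℂ) h3
        · rfl
        · rw [hCW, hCW]; exact (congrArg (starRingEnd ℂ) h5).symm
        · rw [hCW, hCW]; exact congrArg (starRingEnd ℂ) h4
        · rw [hCW, hCW]; exact congrArg (starRingEnd ℂ) h5
        · rfl
      have P4 : ∀ i j : Fin 3, (inner ℂ (euclConj (x i)) (v j) : ℂ)
          = inner ℂ (euclConj (x j)) (v i) := by
        intro i j
        show (inner ℂ (euclConj (x i)) (σ • W j) : ℂ) = inner ℂ (euclConj (x j)) (σ • W i)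
        rw [inner_smul_right, inner_smul_right, P4W i j]
      set b0 : Fin 3 := ((embed3 r).symm cc).1 with hb0
      set ℓ0 : Fin r := ((embed3 r).symm cc).2 with hℓ0
      have hpair : embed3 r (b0, ℓ0) = cc := by
        rw [hb0, hℓ0, Prod.mk.eta, Equiv.apply_symm_apply]
      have hWb : W b0 ℓ0 = starRingEnd ℂ (z cc) := by rw [hWapp, hpair]
      have hnz : ¬((0:ℂ) = 0 ∧ v b0 = 0) := by
        rintro ⟨-, hvb⟩
        have : σ • W b0 = 0 := hvb
        rcases smul_eq_zero.mp this with h | h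
        · exact hσ0 h
        · have : W b0 ℓ0 = 0 := by rw [h]; rfl
          rw [hWb] at this
          exact hcc (by simpa using congrArg (starRingEnd ℂ) this)
      exact not_extremal_of_data x hx (fun _ => 0) v P1 P2 P3 P4 b0 hnz hext
    have hr1 : r ≠ 1 := by
      intro h1
      subst h1
      set c : Fin 3 → ℂ := fun i => x i 0 with hc
      have hxi0 : ∀ i, ‖x i 0‖ = 1 := by
        intro i
        have h := hx i
        have h2 : ‖x i‖^2 = ‖x i 0‖^2 := by
          rw [EuclideanSpace.norm_eq, Real.sq_sqrt (by positivity), Fin.sum_univ_one]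
        have h2' : ‖x i 0‖^2 = 1 := by rw [← h2, h]; norm_num
        rw [← Real.sqrt_sq (norm_nonneg (x i 0)), h2', Real.sqrt_one]
      have P1 : ∀ i, (inner ℂ (x i) ((fun _ : Fin 3 => (0 : EuclideanSpace ℂ (Fin 1))) i) : ℂ) = 0 := by
        intro i; exact inner_zero_right _
      have P2 : ∀ i, ‖c i‖^2 + ‖(0 : EuclideanSpace ℂ (Fin 1))‖^2 ≤ 1 := by
        intro i
        rw [norm_zero, hc]
        simp only []
        rw [hxi0 i]
        norm_num
      have P3 : ∀ i j : Fin 3, c j • x i = c i • x j := by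
        intro i j
        ext ℓ
        have hℓ : ℓ = 0 := Subsingleton.elim ℓ 0
        subst hℓ
        show c j * x i 0 = c i * x j 0
        rw [hc]
        ring
      have P4 : ∀ i j : Fin 3, (inner ℂ (euclConj (x i)) ((0 : EuclideanSpace ℂ (Fin 1))) : ℂ)
          = inner ℂ (euclConj (x j)) ((0 : EuclideanSpace ℂ (Fin 1))) := by
        intro i j
        rw [inner_zero_right, inner_zero_right]
      have hnz : ¬(c 0 = 0 ∧ (0 : EuclideanSpace ℂ (Fin 1)) = 0) := by
        rintro ⟨h0, -⟩
        have := hxi0 0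
        rw [show x 0 0 = c 0 from rfl, h0] at this
        simp at this
      exact not_extremal_of_data x hx c (fun _ => 0) P1 P2 P3 P4 0 hnz hext
    have hrle := ker_rank hker
    exact ⟨by omega, hker⟩
  · -- r = 2 ∧ trivial kernel → extremal
    rintro ⟨hr2, hker⟩
    subst hr2
    intro M _ _ _ A B hnorm hcomm i
    have hnec := fun (j : Fin 3) (m : M) => necessary (hx j) (hnorm j) m
    set V : Fin 3 → M → EuclideanSpace ℂ (Fin 2) :=
      fun j m => (varEquiv (EuclideanSpace ℂ (Fin 2)) (A j m)).2.1 with hV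
    set f : Fin 3 → M → ℂ :=
      fun j m => (varEquiv (EuclideanSpace ℂ (Fin 2)) (A j m)).1 with hf
    have hAm : ∀ j m, A j m = varMk (f j m) (V j m) 0 := by
      intro j m
      conv_lhs => rw [varMk_surj (A j m)]
      rw [(hnec j m).1]
    have hmid : ∀ a b (m : M),
        varOp (x a) (euclConj (x a)) (A b m) + A a (B b m)
          = varOp (x b) (euclConj (x b)) (A a m) + A b (B a m) := by
      intro a b m
      have h := hcomm a b
      rw [blockOp_comp, blockOp_comp] at h
      obtain ⟨-, hA2, -⟩ := blockOp_inj h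
      have := congrArg (fun (F : M →L[ℂ] VarSpace (EuclideanSpace ℂ (Fin 2))) => F m) hA2
      simpa using this
    have hcompo : ∀ a b (m : M),
        (f b m • x a + V a (B b m) = f a m • x b + V b (B a m))
          ∧ ((inner ℂ (euclConj (x a)) (V b m) : ℂ) = inner ℂ (euclConj (x b)) (V a m)) := by
      intro a b m
      have h := hmid a b m
      rw [hAm b m, hAm a m, hAm a (B b m), hAm b (B a m), varOp_varMk, varOp_varMk,
        varMk_add, varMk_add] at h
      obtain ⟨h1, h2, h3⟩ := varMk_inj h
      exact ⟨h2, by simpa using h3⟩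
    have hV0 : ∀ j m, V j m = 0 := by
      intro j m
      exact kernel_forces_V hker (fun b => V b m) (fun b => (hnec b m).2)
        (fun a b => (hcompo a b m).2) j
    have hf0 : ∀ j m, f j m = 0 := by
      intro j m
      have hcc : ∀ a b : Fin 3, (fun b => f b m) b • x a = (fun b => f b m) a • x b := by
        intro a b
        have h := (hcompo a b m).1
        rw [hV0 a (B b m), hV0 b (B a m)] at h
        simpa using h
      exact parallel_ker hx hker (fun b => f b m) hcc j
    ext m
    rw [hAm i m, hf0, hV0, varMk_zero]
    rfl
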